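/- arXiv:math/0307340 — 2 statements merged into one kernel-verified Lean document; each statement's English description precedes it below -/
import Mathlib

section
/- For every rational number s < -1 there exist a unique natural number n and a unique finite sequence of integers d_0, d_1, ..., d_n with d_i ≤ -2 for every i, such that s = [d_0, d_1, ..., d_n]. -/
/-!
A tail value `v < -1` puts `d - 1/v` in the open interval `(d, d + 1)`, so every expansion
with digits `≤ -2` has value `< -1` and leading digit `⌊s⌋`; uniqueness follows by
induction on the length. For existence take `d₀ = ⌊s⌋` and continue with
`-1 / fract s < -1`, whose denominator is the numerator of `fract s`, strictly smaller than the
denominator of `s`, so the process terminates.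
-/

def negCF : List ℤ → ℚ
  | [] => 0
  | [d] => (d : ℚ)
  | d :: l => (d : ℚ) - 1 / negCF l

theorem negCF_cons (d : ℤ) {l : List ℤ} (hl : l ≠ []) : negCF (d :: l) = d - 1 / negCF l := by
  obtain _ | ⟨e, l⟩ := l
  · exact absurd rfl hl
  · rfl

theorem negCF_cons_mem_Ioo (d : ℤ) {l : List ℤ} (hl : l ≠ []) (hv : negCF l < -1) :
    negCF (d :: l) ∈ Set.Ioo (d : ℚ) (d + 1) := by
  have h₀ : -1 < 1 / negCF l := by rw [lt_div_iff_of_neg (by linarith)]; linarith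
  have h₁ : 1 / negCF l < 0 := one_div_neg.2 (by linarith)
  rw [negCF_cons d hl]
  constructor <;> linarith

theorem negCF_lt_neg_one : ∀ {l : List ℤ}, l ≠ [] → (∀ d ∈ l, d ≤ -2) → negCF l < -1
  | [d], _, h => by
    have : (d : ℚ) ≤ -2 := mod_cast h d (List.mem_singleton_self d)
    simp only [negCF]; linarith
  | d :: e :: l, _, h => by
    have hd : (d : ℚ) ≤ -2 := mod_cast h d List.mem_cons_self
    have hv := negCF_lt_neg_one (List.cons_ne_nil e l) (List.forall_mem_cons.1 h).2
    linarith [(negCF_cons_mem_Ioo d (List.cons_ne_nil e l) hv).2]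

theorem negCF_cons_cons_mem_Ioo (d : ℤ) {e : ℤ} {l : List ℤ} (h : ∀ x ∈ e :: l, x ≤ -2) :
    negCF (d :: e :: l) ∈ Set.Ioo (d : ℚ) (d + 1) :=
  negCF_cons_mem_Ioo d (List.cons_ne_nil e l) (negCF_lt_neg_one (List.cons_ne_nil e l) h)

theorem floor_negCF {d : ℤ} {l : List ℤ} (h : ∀ x ∈ d :: l, x ≤ -2) : ⌊negCF (d :: l)⌋ = d := by
  obtain _ | ⟨e, l⟩ := l
  · exact Int.floor_intCast d
  · have := negCF_cons_cons_mem_Ioo d (List.forall_mem_cons.1 h).2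
    exact Int.floor_eq_iff.2 ⟨this.1.le, this.2⟩

theorem negCF_injOn : Set.InjOn negCF {l | l ≠ [] ∧ ∀ d ∈ l, d ≤ -2} := by
  intro l₁ h₁ l₂ h₂ h
  induction l₁ generalizing l₂ with
  | nil => exact absurd rfl h₁.1
  | cons d t₁ ih =>
    obtain _ | ⟨d₂, t₂⟩ := l₂
    · exact absurd rfl h₂.1
    obtain rfl : d = d₂ := by rw [← floor_negCF h₁.2, h, floor_negCF h₂.2]
    have ht₁ := (List.forall_mem_cons.1 h₁.2).2
    have ht₂ := (List.forall_mem_cons.1 h₂.2).2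
    congr 1
    obtain _ | ⟨e₁, t₁⟩ := t₁ <;> obtain _ | ⟨e₂, t₂⟩ := t₂
    · rfl
    · exact absurd h (negCF_cons_cons_mem_Ioo d ht₂).1.ne
    · exact absurd h (negCF_cons_cons_mem_Ioo d ht₁).1.ne'
    · refine ih ⟨List.cons_ne_nil _ _, ht₁⟩ ⟨List.cons_ne_nil _ _, ht₂⟩ ?_
      simpa [negCF_cons d (List.cons_ne_nil _ _)] using h

theorem den_neg_inv_fract_lt {s : ℚ} (h : Int.fract s ≠ 0) : (-(Int.fract s)⁻¹).den < s.den := by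
  rw [Rat.den_neg_eq_den, Rat.den_inv_of_ne_zero h, ← Rat.den_intFract s]
  have hnum_lt := Rat.num_lt_denom_iff.2 (Int.fract_lt_one s)
  have hnum_pos := Rat.num_pos.2 ((Int.fract_nonneg s).lt_of_ne' h)
  omega

theorem exists_negCF_eq {s : ℚ} (hs : s < -1) :
    ∃ l : List ℤ, l ≠ [] ∧ (∀ d ∈ l, d ≤ -2) ∧ negCF l = s := by
  induction hn : s.den using Nat.strong_induction_on generalizing s with
  | _ n ih =>
  have hfloor : ⌊s⌋ ≤ -2 := by
    have : ⌊s⌋ < -1 := Int.floor_lt.2 (by exact_mod_cast hs)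
    omega
  have hs_eq := Int.floor_add_fract s
  by_cases hf : Int.fract s = 0
  · refine ⟨[⌊s⌋], List.cons_ne_nil _ _, by simpa using hfloor, ?_⟩
    simp only [negCF]
    linarith
  · have hf₀ : 0 < Int.fract s := (Int.fract_nonneg s).lt_of_ne' hf
    have ht : -(Int.fract s)⁻¹ < -1 := neg_lt_neg ((one_lt_inv₀ hf₀).2 (Int.fract_lt_one s))
    obtain ⟨l, hl, hl₂, hl_val⟩ := ih _ (hn ▸ den_neg_inv_fract_lt hf) ht rfl
    refine ⟨⌊s⌋ :: l, List.cons_ne_nil _ _, List.forall_mem_cons.2 ⟨hfloor, hl₂⟩, ?_⟩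
    rw [negCF_cons _ hl, hl_val, one_div, inv_neg, inv_inv, sub_neg_eq_add, hs_eq]

/-- For every rational number `s < -1` there exist a unique natural number `n` and
a unique finite sequence of integers `d₀, …, dₙ` with `dᵢ ≤ -2` for every `i`, such
that `s = [d₀, …, dₙ]` (encoded as a unique nonempty list of integers). -/
theorem negCF_exists_unique (s : ℚ) (hs : s < -1) :
    ∃! l : List ℤ, l ≠ [] ∧ (∀ d ∈ l, d ≤ -2) ∧ negCF l = s := by
  obtain ⟨l, hl, hl₂, rfl⟩ := exists_negCF_eq hs
  exact ⟨l, ⟨hl, hl₂, rfl⟩, fun l' h' => negCF_injOn ⟨h'.1, h'.2.1⟩ ⟨hl, hl₂⟩ h'.2.2⟩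
end

section
/- Let r ∈ ℚ with 0 < r < 1, and let -1/r = [d_0, ..., d_n] be its negative continued fraction expansion with all d_i ≤ -2. Let t ∈ ℤ satisfy -1/r < t ≤ -1, and set r' = 1/(1/r + t + 1). Then 0 < r' < 1, and the negative continued fraction expansion of -1/r' is [d_0 − t − 1, d_1, ..., d_n]; that is, its coefficients are d_0' = d_0 − (t+1) and d_i' = d_i for i > 0, and all coefficients are ≤ -2. -/
/-! Only the head coefficient of the expansion moves: `-1/r' = -1/r - (t + 1)`, and subtracting
an integer from `[d₀, …, dₙ]` subtracts it from `d₀`. The new head stays `≤ -2` because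
`d₀ ≤ [d₀, …, dₙ] = -1/r < t`, the tail `[d₁, …, dₙ]` being negative. -/

@[simp]
lemma negCF_cons_cons (d e : ℤ) (l : List ℤ) :
    negCF (d :: e :: l) = d - 1 / negCF (e :: l) :=
  rfl

lemma negCF_cons_le_neg_one (d : ℤ) (l : List ℤ) (h : ∀ x ∈ d :: l, x ≤ -2) :
    negCF (d :: l) ≤ -1 := by
  induction l generalizing d with
  | nil =>
    have hd : (d : ℚ) ≤ -2 := by exact_mod_cast h d List.mem_cons_self
    simp only [negCF]
    linarith
  | cons e l ih =>
    rw [List.forall_mem_cons] at h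
    have hd : (d : ℚ) ≤ -2 := by exact_mod_cast h.1
    have htail : negCF (e :: l) ≤ -1 := ih e h.2
    have hinv : -1 ≤ 1 / negCF (e :: l) := by
      rw [le_div_iff_of_neg (by linarith)]
      linarith
    rw [negCF_cons_cons]
    linarith

lemma le_negCF_cons (d : ℤ) (l : List ℤ) (h : ∀ x ∈ l, x ≤ -2) :
    (d : ℚ) ≤ negCF (d :: l) := by
  cases l with
  | nil => simp [negCF]
  | cons e l =>
    have htail : negCF (e :: l) < 0 := by linarith [negCF_cons_le_neg_one e l h]
    have hinv : 1 / negCF (e :: l) < 0 := one_div_neg.mpr htail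
    rw [negCF_cons_cons]
    linarith

lemma negCF_cons_sub (d c : ℤ) (l : List ℤ) :
    negCF ((d - c) :: l) = negCF (d :: l) - c := by
  cases l with
  | nil => simp [negCF]
  | cons e l =>
    simp only [negCF_cons_cons]
    push_cast
    ring

theorem negCF_shift_general (r : ℚ) (d : ℤ) (l : List ℤ)
    (hcoef : ∀ x ∈ d :: l, x ≤ -2) (hexp : -1 / r = negCF (d :: l))
    (t : ℤ) (ht0 : -1 / r < (t : ℚ)) :
    0 < 1 / (1 / r + t + 1) ∧ 1 / (1 / r + t + 1) < 1 ∧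
      -1 / (1 / (1 / r + t + 1)) = negCF ((d - t - 1) :: l) ∧
      (∀ x ∈ (d - t - 1) :: l, x ≤ -2) := by
  rw [List.forall_mem_cons] at hcoef
  have hpos : 1 < 1 / r + t + 1 := by
    rw [neg_div] at ht0
    linarith
  have hdt : d < t := by
    have := le_negCF_cons d l hcoef.2
    exact_mod_cast this.trans_lt (hexp ▸ ht0)
  refine ⟨by positivity, (div_lt_one (by positivity)).mpr hpos, ?_,
    List.forall_mem_cons.mpr ⟨by omega, hcoef.2⟩⟩
  rw [sub_sub, negCF_cons_sub, ← hexp, div_div_eq_mul_div, div_one, neg_div]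
  push_cast
  ring

/-- Let `r ∈ ℚ` with `0 < r < 1`, and let `-1/r = [d₀, …, dₙ]` be its negative
continued fraction expansion with all `dᵢ ≤ -2`.  Let `t ∈ ℤ` satisfy
`-1/r < t ≤ -1`, and set `r' = 1/(1/r + t + 1)`.  Then `0 < r' < 1`, and the
negative continued fraction expansion of `-1/r'` is `[d₀ - t - 1, d₁, …, dₙ]`,
all of whose coefficients are `≤ -2`. -/
theorem negCF_shift (r : ℚ) (hr0 : 0 < r) (hr1 : r < 1) (d : ℤ) (l : List ℤ)
    (hcoef : ∀ x ∈ d :: l, x ≤ -2) (hexp : -1 / r = negCF (d :: l))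
    (t : ℤ) (ht0 : -1 / r < (t : ℚ)) (ht1 : t ≤ -1) :
    0 < 1 / (1 / r + t + 1) ∧ 1 / (1 / r + t + 1) < 1 ∧
      -1 / (1 / (1 / r + t + 1)) = negCF ((d - t - 1) :: l) ∧
      (∀ x ∈ (d - t - 1) :: l, x ≤ -2) :=
  negCF_shift_general r d l hcoef hexp t ht0
end
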